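/- First-best database composition: let λ ∈ (0,1] and c > 0, and define the first-best objective W(n0,n1) = λ·V_S(n0,n1) + (1−λ)·V_L(n0,n1) − c·(n0+n1) on [0,∞)×[0,∞). If (n0*, n1*) maximizes W over [0,∞)×[0,∞), then n1* ≥ n0*; moreover, if in addition n0* > 0, then n1* > n0*. -/

import Mathlib

/-!
Write `W` for the first-best objective. Exchanging `n0` and `n1` leaves `V_L`, `D` and the cost
unchanged and changes `W` by `λ(2σ² + 1)(n0 - n1)/D`, so a maximizer has `n0 ≤ n1`. On the diagonal
`n0 = n1 = t > 0`, moving to `(t - ε, t + ε)` keeps the cost fixed and changes `W` by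
`ε (λ(2σ² + 1) D(t,t) - O(ε)) / (D(t-ε,t+ε) D(t,t))`, which is positive for small `ε > 0`.
-/

open Filter Topology

noncomputable def Dden (σ n0 n1 : ℝ) : ℝ :=
  σ^2 * (n0 + n1 + 2*n0*n1) + (1+n0)*(1+n1)

noncomputable def VL (σ n0 n1 : ℝ) : ℝ :=
  σ^4 * (n0 + n1 + 2*n0*n1) / Dden σ n0 n1

noncomputable def VS (σ n0 n1 : ℝ) : ℝ :=
  VL σ n0 n1 + (3*σ^2*n0*n1 + 2*σ^2*n1 + n1 + n0*n1) / Dden σ n0 n1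

noncomputable def firstBest (σ lam c n0 n1 : ℝ) : ℝ :=
  lam * VS σ n0 n1 + (1 - lam) * VL σ n0 n1 - c * (n0 + n1)

lemma Dden_pos (σ : ℝ) {n0 n1 : ℝ} (h0 : 0 ≤ n0) (h1 : 0 ≤ n1) : 0 < Dden σ n0 n1 := by
  unfold Dden
  nlinarith [sq_nonneg σ, mul_nonneg h0 h1]

lemma Dden_comm (σ n0 n1 : ℝ) : Dden σ n1 n0 = Dden σ n0 n1 := by
  unfold Dden; ring

lemma firstBest_swap_sub (σ lam c n0 n1 : ℝ) :
    firstBest σ lam c n1 n0 - firstBest σ lam c n0 n1 =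
      lam * (2 * σ ^ 2 + 1) * (n0 - n1) / Dden σ n0 n1 := by
  unfold firstBest VS VL
  rw [Dden_comm]
  ring

lemma firstBest_spread_sub (σ lam c : ℝ) {t ε : ℝ} (hε : Dden σ (t - ε) (t + ε) ≠ 0)
    (h : Dden σ t t ≠ 0) :
    firstBest σ lam c (t - ε) (t + ε) - firstBest σ lam c t t =
      ε * (lam * (2 * σ ^ 2 + 1) * Dden σ t t
          - ε * (2 * σ ^ 4 * (1 + t) + lam * ((2 * σ ^ 4 + 4 * σ ^ 2 + 1) * t + 3 * σ ^ 2 + 1)))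
        / (Dden σ (t - ε) (t + ε) * Dden σ t t) := by
  unfold firstBest VS VL
  field_simp
  unfold Dden
  ring

lemma exists_firstBest_spread_gt (σ c : ℝ) {lam t : ℝ} (hl : 0 < lam) (ht : 0 < t) :
    ∃ ε, 0 < ε ∧ ε < t ∧ firstBest σ lam c t t < firstBest σ lam c (t - ε) (t + ε) := by
  have hD := Dden_pos σ ht.le ht.le
  set A := lam * (2 * σ ^ 2 + 1) * Dden σ t t
  set B := 2 * σ ^ 4 * (1 + t) + lam * ((2 * σ ^ 4 + 4 * σ ^ 2 + 1) * t + 3 * σ ^ 2 + 1)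
  have hA : 0 < A := by positivity
  have hsmall : ∀ᶠ ε in 𝓝[>] (0 : ℝ), 0 < ε ∧ ε < t ∧ ε * B < A :=
    eventually_mem_nhdsWithin.and <| nhdsWithin_le_nhds <| (eventually_lt_nhds ht).and <|
      (continuous_id.mul continuous_const).continuousAt.eventually_lt continuousAt_const
        (by simpa using hA)
  obtain ⟨ε, hε, hεt, hεB⟩ := hsmall.exists
  refine ⟨ε, hε, hεt, sub_pos.mp ?_⟩
  have hDε := Dden_pos σ (sub_nonneg.mpr hεt.le) (by linarith : 0 ≤ t + ε)
  rw [firstBest_spread_sub σ lam c hDε.ne' hD.ne']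
  exact div_pos (mul_pos hε (by linarith)) (by positivity)

theorem stmt9_general (σ lam c : ℝ) (hl0 : 0 < lam)
    (n0 n1 : ℝ) (h0 : 0 ≤ n0) (h1 : 0 ≤ n1)
    (hmax : ∀ m0 m1 : ℝ, 0 ≤ m0 → 0 ≤ m1 →
      lam * VS σ m0 m1 + (1-lam) * VL σ m0 m1 - c*(m0+m1) ≤
      lam * VS σ n0 n1 + (1-lam) * VL σ n0 n1 - c*(n0+n1)) :
    n0 ≤ n1 ∧ (0 < n0 → n0 < n1) := by
  have hW : ∀ m0 m1, 0 ≤ m0 → 0 ≤ m1 → firstBest σ lam c m0 m1 ≤ firstBest σ lam c n0 n1 := hmax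
  have hle : n0 ≤ n1 := by
    have hswap := sub_nonpos.mpr (hW n1 n0 h1 h0)
    rw [firstBest_swap_sub] at hswap
    by_contra! hlt
    have := Dden_pos σ h0 h1
    have : 0 < lam * (2 * σ ^ 2 + 1) * (n0 - n1) / Dden σ n0 n1 := by
      have := sub_pos.mpr hlt; positivity
    linarith
  refine ⟨hle, fun hpos => hle.lt_of_ne ?_⟩
  rintro rfl
  obtain ⟨ε, hε, hεt, hgt⟩ := exists_firstBest_spread_gt σ c hl0 hpos
  exact (hW (n0 - ε) (n0 + ε) (by linarith) (by linarith)).not_gt hgt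

/-- First-best database composition: any maximizer of the first-best objective
over the nonnegative quadrant satisfies `n1* ≥ n0*`, strictly if `n0* > 0`. -/
theorem stmt9 (σ lam c : ℝ) (hσ : 0 < σ) (hl0 : 0 < lam) (hl1 : lam ≤ 1) (hc : 0 < c)
    (n0 n1 : ℝ) (h0 : 0 ≤ n0) (h1 : 0 ≤ n1)
    (hmax : ∀ m0 m1 : ℝ, 0 ≤ m0 → 0 ≤ m1 →
      lam * VS σ m0 m1 + (1-lam) * VL σ m0 m1 - c*(m0+m1) ≤
      lam * VS σ n0 n1 + (1-lam) * VL σ n0 n1 - c*(n0+n1)) :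
    n0 ≤ n1 ∧ (0 < n0 → n0 < n1) :=
  stmt9_general σ lam c hl0 n0 n1 h0 h1 hmax
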